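/- If G is a graph with chromatic number strictly less than its girth, then G admits an acyclic orientation with no dependent arcs (i.e., d_min(G) = 0). -/

import Mathlib

/-!
Colour `G` properly with `n < girth G` colours and orient every edge towards its larger colour.
Colours strictly increase along directed paths, so the orientation is acyclic and a directed path
from `u` to `v` has at most `c v - c u < n` arcs. If reversing an arc `u → v` created a directed
cycle, that cycle would have to use the new arc `v → u`, and cutting it there leaves a directed
path from `u` to `v` avoiding the arc `u → v`. Together with the edge `uv` it closes a cycle of
length at most `n` in `G`, shorter than the girth.
-/

variable {V : Type*}

/-- An orientation of a simple graph `G`: each edge gets exactly one direction. -/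
structure Orient (G : SimpleGraph V) where
  dir : V → V → Prop
  dir_adj : ∀ u v, dir u v → G.Adj u v
  adj_dir : ∀ u v, G.Adj u v → dir u v ∨ dir v u
  asymm : ∀ u v, dir u v → ¬ dir v u

/-- The relation obtained from `dir` by reversing the single arc `u → v`. -/
def reverseArc (dir : V → V → Prop) (u v : V) : V → V → Prop :=
  fun a b => (dir a b ∧ ¬(a = u ∧ b = v)) ∨ (a = v ∧ b = u)

/-- A relation is acyclic if there is no directed cycle. -/
def IsAcyclicRel (dir : V → V → Prop) : Prop :=
  ∀ u v, dir u v → ¬ Relation.ReflTransGen dir v u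

/-- An arc `u → v` is dependent if its reversal creates a directed cycle. -/
def DependentArc (dir : V → V → Prop) (u v : V) : Prop :=
  dir u v ∧ ¬ IsAcyclicRel (reverseArc dir u v)

/-- A cover graph admits an acyclic orientation with no dependent arcs. -/
def IsCoverGraph (G : SimpleGraph V) : Prop :=
  ∃ D : Orient G, IsAcyclicRel D.dir ∧ ∀ u v, ¬ DependentArc D.dir u v

/-- The number of dependent arcs of an orientation. -/
noncomputable def numDependent {G : SimpleGraph V} (D : Orient G) : ℕ :=
  Set.ncard {p : V × V | DependentArc D.dir p.1 p.2}

/-- `d_min`: minimum number of dependent arcs over all acyclic orientations. -/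
noncomputable def dmin (G : SimpleGraph V) : ℕ :=
  sInf {n | ∃ D : Orient G, IsAcyclicRel D.dir ∧ numDependent D = n}

/-- `d_max`: maximum number of dependent arcs over all acyclic orientations. -/
noncomputable def dmax (G : SimpleGraph V) : ℕ :=
  sSup {n | ∃ D : Orient G, IsAcyclicRel D.dir ∧ numDependent D = n}

/-- `c(G)`: minimum number of edges to delete from `G` to get a cover graph. -/
noncomputable def coverDeletion (G : SimpleGraph V) : ℕ :=
  sInf {n | ∃ F : Set (Sym2 V), F ⊆ G.edgeSet ∧ IsCoverGraph (G.deleteEdges F) ∧ F.ncard = n}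

/-- The generalized Mycielski graph `M_m(G)`; `none` is the apex `u`,
`some (i, a)` is the vertex `⟨i, a⟩`. -/
def genMycielski (G : SimpleGraph V) (m : ℕ) : SimpleGraph (Option (Fin (m + 1) × V)) where
  Adj x y :=
    match x, y with
    | some (i, a), some (j, b) =>
        G.Adj a b ∧ ((i = j ∧ (i : ℕ) = 0) ∨ (i : ℕ) + 1 = (j : ℕ) ∨ (j : ℕ) + 1 = (i : ℕ))
    | some (i, _), none => (i : ℕ) = m
    | none, some (j, _) => (j : ℕ) = m
    | none, none => False
  symm := by
    constructor
    rintro (_ | ⟨i, a⟩) (_ | ⟨j, b⟩) h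
    · exact h
    · exact h
    · exact h
    · refine ⟨h.1.symm, ?_⟩
      rcases h.2 with ⟨h1, h2⟩ | h' | h'
      · exact Or.inl ⟨h1.symm, h1 ▸ h2⟩
      · exact Or.inr (Or.inr h')
      · exact Or.inr (Or.inl h')
  loopless := by
    constructor
    rintro (_ | ⟨i, a⟩) h <;> simp_all

open Relation SimpleGraph

def deleteArc (r : V → V → Prop) (u v : V) : V → V → Prop :=
  fun a b => r a b ∧ ¬(a = u ∧ b = v)

section Arcs

variable {r : V → V → Prop} {u v x y : V}

theorem isAcyclicRel_of_lt {α : Type*} [Preorder α] (c : V → α)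
    (hc : ∀ a b, r a b → c a < c b) : IsAcyclicRel r := by
  intro a b hab hba
  have hle : ReflTransGen (· ≤ ·) (c b) (c a) := hba.lift c fun _ _ h => (hc _ _ h).le
  exact (hc a b hab).not_ge (reflTransGen_eq_self.le _ _ hle)

theorem reflTransGen_reverseArc_cases (h : ReflTransGen (reverseArc r u v) x y) :
    ReflTransGen (deleteArc r u v) x y ∨
      ReflTransGen (deleteArc r u v) x v ∧ ReflTransGen (deleteArc r u v) u y := by
  induction h with
  | refl => exact .inl .refl
  | tail _ hyz ih =>
    rcases hyz with hyz | ⟨rfl, rfl⟩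
    · exact ih.imp (·.tail hyz) (And.imp_right (·.tail hyz))
    · exact .inr ⟨ih.elim id And.left, .refl⟩

theorem DependentArc.reflTransGen_deleteArc (hr : IsAcyclicRel r) (h : DependentArc r u v) :
    ReflTransGen (deleteArc r u v) u v := by
  by_contra hno
  refine h.2 fun a b hab hba => ?_
  rcases hab with hab | ⟨rfl, rfl⟩
  · rcases reflTransGen_reverseArc_cases hba with hba | ⟨hbv, hua⟩
    · exact hr a b hab.1 (ReflTransGen.mono (fun _ _ => And.left) _ _ hba)
    · exact hno ((hua.tail hab).trans hbv)
  · exact hno ((reflTransGen_reverseArc_cases hba).elim id And.left)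

theorem SimpleGraph.exists_walk_length_add_le_of_reflTransGen {G : SimpleGraph V} (c : V → ℕ)
    (hadj : ∀ a b, r a b → G.Adj a b) (hc : ∀ a b, r a b → c a < c b)
    (h : ReflTransGen r x y) : ∃ w : G.Walk x y, w.length + c x ≤ c y := by
  induction h with
  | refl => exact ⟨.nil, by simp⟩
  | tail _ hyz ih =>
    obtain ⟨w, hw⟩ := ih
    refine ⟨w.concat (hadj _ _ hyz), ?_⟩
    have := hc _ _ hyz
    rw [Walk.length_concat]
    omega

end Arcs

namespace SimpleGraph.Coloring

variable {G : SimpleGraph V} {α : Type*} [LinearOrder α]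

def toOrient (C : G.Coloring α) : Orient G where
  dir a b := G.Adj a b ∧ C a < C b
  dir_adj _ _ h := h.1
  adj_dir _ _ h := (lt_or_gt_of_ne (C.valid h)).imp (⟨h, ·⟩) (⟨h.symm, ·⟩)
  asymm _ _ h h' := lt_asymm h.2 h'.2

theorem isAcyclicRel_toOrient (C : G.Coloring α) : IsAcyclicRel C.toOrient.dir :=
  isAcyclicRel_of_lt C fun _ _ h => h.2

theorem not_dependentArc_toOrient {n : ℕ} (C : G.Coloring (Fin n)) (hn : n < G.girth)
    (u v : V) : ¬ DependentArc C.toOrient.dir u v := by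
  classical
  intro hdep
  set H := G.deleteEdges {s(u, v)}
  have hH : ∀ a b, deleteArc C.toOrient.dir u v a b → H.Adj a b := by
    rintro a b ⟨hab, hne⟩
    refine (deleteEdges_adj ..).2 ⟨hab.1, ?_⟩
    simp only [Set.mem_singleton_iff, Sym2.eq_iff, hne, false_or]
    rintro ⟨rfl, rfl⟩
    exact C.toOrient.asymm _ _ hdep.1 hab
  obtain ⟨w, hw⟩ := exists_walk_length_add_le_of_reflTransGen (fun a => (C a : ℕ)) hH
    (fun _ _ h => h.1.2) (hdep.reflTransGen_deleteArc C.isAcyclicRel_toOrient)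
  let p := w.bypass.mapLe (G.deleteEdges_le _)
  have hcycle : (Walk.cons hdep.1.1.symm p).IsCycle := by
    rw [Walk.cons_isCycle_iff]
    refine ⟨w.bypass_isPath.mapLe _, fun hvu => ?_⟩
    rw [Walk.edges_mapLe_eq_edges] at hvu
    have := w.bypass.edges_subset_edgeSet hvu
    simp [H, edgeSet_deleteEdges, Sym2.eq_swap] at this
  have hlen : p.length + 1 ≤ n := by
    have := w.length_bypass_le_length
    have := (C v).isLt
    rw [Walk.length_mapLe]
    omega
  have := girth_le_length hcycle
  rw [Walk.length_cons] at this
  omega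

end SimpleGraph.Coloring

theorem coverGraph_of_chromatic_lt_girth_general (G : SimpleGraph V)
    (h : G.chromaticNumber < G.girth) : IsCoverGraph G := by
  have hχ : G.chromaticNumber ≠ ⊤ := h.ne_top
  have hn : G.chromaticNumber.toNat < G.girth := by
    rwa [← ENat.natCast_lt_natCast, ENat.natCast_toNat hχ]
  obtain ⟨C⟩ := colorable_of_chromaticNumber_ne_top hχ
  exact ⟨C.toOrient, C.isAcyclicRel_toOrient, C.not_dependentArc_toOrient hn⟩

theorem coverGraph_of_chromatic_lt_girth [Finite V] (G : SimpleGraph V)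
    (h : G.chromaticNumber < G.girth) : IsCoverGraph G :=
  coverGraph_of_chromatic_lt_girth_general G h
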